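/- arXiv:0806.1600 — 7 statements merged into one kernel-verified Lean document; each statement's English description precedes it below -/
import Mathlib

section
/- Let φ : [0,∞) → [0,∞) be differentiable and let g : [0,∞) → [0,∞) be locally Lipschitz continuous. Suppose Λ := ∫₀^∞ φ(t) dt < ∞, that there are constants α, β > 0 with g(y) ≤ α·y² for all y ∈ [0,β], and that φ'(t) ≤ g(φ(t)) for all t ≥ 0. Then for every t ≥ (Λ/β)·exp(α·Λ) one has φ(t) ≤ (exp(α·Λ) − 1)/(α·t). -/
/-!
Having total mass `Λ`, the function `φ` must drop below `β e^{-αΛ}` before time `Λ e^{αΛ} / β`.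
From then on Gronwall's inequality for `φ' ≤ (αφ) φ` keeps it below `β`, where `g(y) ≤ α y²`
applies. Hence at any later time `t`, going backwards, `φ` stays above the solution
`y(u) = b / (1 + α b (t - u))` of `y' = α y²` with `y(t) = b = φ(t)`, and
`Λ ≥ ∫₀ᵗ y = log (1 + α b t) / α` gives `1 + α t φ(t) ≤ e^{αΛ}`. The threshold time itself
follows by right-continuity.
-/

open MeasureTheory Set Real

theorem lt_on_Icc_of_lt_on_Ico {f g : ℝ → ℝ} {a b : ℝ} (hf : ContinuousOn f (Icc a b))
    (hg : ContinuousOn g (Icc a b)) (ha : f a < g a)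
    (hstep : ∀ c ∈ Ioc a b, (∀ x ∈ Ico a c, f x < g x) → f c < g c) :
    ∀ x ∈ Icc a b, f x < g x := by
  by_contra! ⟨x, hx, hgfx⟩
  set S := Icc a b ∩ (g - f) ⁻¹' Iic 0
  have hS : IsClosed S := (hg.sub hf).preimage_isClosed_of_isClosed isClosed_Icc isClosed_Iic
  have hbdd : BddBelow S := ⟨a, fun y hy => hy.1.1⟩
  have hcS : sInf S ∈ S := hS.csInf_mem ⟨x, hx, sub_nonpos.2 hgfx⟩ hbdd
  have hgfc : g (sInf S) ≤ f (sInf S) := sub_nonpos.1 hcS.2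
  have hac : a < sInf S := hcS.1.1.lt_of_ne fun h => (h ▸ ha).not_ge hgfc
  refine (hstep _ ⟨hac, hcS.1.2⟩ fun y hy => ?_).not_ge hgfc
  by_contra! hy'
  exact hy.2.not_ge (csInf_le hbdd ⟨⟨hy.1, hy.2.le.trans hcS.1.2⟩, sub_nonpos.2 hy'⟩)

theorem le_mul_exp_integral_of_hasDerivAt_le_mul {f f' k : ℝ → ℝ} {a b : ℝ} (hab : a ≤ b)
    (hf : ContinuousOn f (Icc a b)) (hk : ContinuousOn k (Icc a b))
    (hf' : ∀ x ∈ Ioo a b, HasDerivAt f (f' x) x) (hbound : ∀ x ∈ Ioo a b, f' x ≤ k x * f x) :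
    f b ≤ f a * exp (∫ x in a..b, k x) := by
  set K := fun u => ∫ x in a..u, k x
  have hK : ContinuousOn K (Icc a b) := by
    have hk_int : IntegrableOn k (uIcc a b) := by rw [uIcc_of_le hab]; exact hk.integrableOn_Icc
    simpa only [uIcc_of_le hab] using intervalIntegral.continuousOn_primitive_interval hk_int
  have hK' : ∀ x ∈ Ioo a b, HasDerivAt K (k x) x := fun x hx =>
    intervalIntegral.integral_hasDerivAt_right
      ((hk.mono (Icc_subset_Icc le_rfl hx.2.le)).intervalIntegrable_of_Icc hx.1.le)
      ((hk.mono Ioo_subset_Icc_self).stronglyMeasurableAtFilter (μ := volume) isOpen_Ioo x hx)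
      (hk.continuousAt (Icc_mem_nhds hx.1 hx.2))
  have hanti : AntitoneOn (fun u => f u * exp (-K u)) (Icc a b) := by
    refine antitoneOn_of_hasDerivWithinAt_nonpos (convex_Icc a b) (hf.mul hK.neg.rexp)
      (fun x hx => ?_) (fun x hx => ?_) (f' := fun x => (f' x - k x * f x) * exp (-K x))
    · rw [interior_Icc] at hx
      refine ((hf' x hx).mul (hK' x hx).neg.exp).hasDerivWithinAt.congr_deriv ?_
      simp only [Pi.neg_apply]
      ring
    · rw [interior_Icc] at hx
      exact mul_nonpos_of_nonpos_of_nonneg (sub_nonpos.2 (hbound x hx)) (exp_pos _).le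
  have := hanti ⟨le_rfl, hab⟩ ⟨hab, le_rfl⟩ hab
  simp only [K, intervalIntegral.integral_same, neg_zero, exp_zero, mul_one] at this
  rwa [exp_neg, ← div_eq_mul_inv, div_le_iff₀ (exp_pos _)] at this

theorem le_on_Icc_of_hasDerivAt_le_of_lt {f f' y y' : ℝ → ℝ} {a b : ℝ}
    (hf : ContinuousOn f (Icc a b)) (hy : ContinuousOn y (Icc a b))
    (hf' : ∀ x ∈ Ioo a b, HasDerivAt f (f' x) x) (hy' : ∀ x ∈ Ioo a b, HasDerivAt y (y' x) x)
    (hb : y b ≤ f b) (hcomp : ∀ x ∈ Ioo a b, f x < y x → f' x ≤ y' x) :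
    ∀ x ∈ Icc a b, y x ≤ f x := by
  intro x hx
  by_contra! hfy
  have hsub : Icc x b ⊆ Icc a b := Icc_subset_Icc_left hx.1
  refine (lt_on_Icc_of_lt_on_Ico (hf.mono hsub) (hy.mono hsub) hfy (fun c hc hlt => ?_) b
    ⟨hx.2, le_rfl⟩).not_ge hb
  have hIoo : Ioo x c ⊆ Ioo a b := Ioo_subset_Ioo hx.1 hc.2
  have hanti : AntitoneOn (f - y) (Icc x c) := by
    refine antitoneOn_of_hasDerivWithinAt_nonpos (convex_Icc x c)
      ((hf.sub hy).mono (Icc_subset_Icc hx.1 hc.2)) (fun z hz => ?_) (fun z hz => ?_)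
      (f' := f' - y')
    · rw [interior_Icc] at hz
      exact ((hf' z (hIoo hz)).sub (hy' z (hIoo hz))).hasDerivWithinAt
    · rw [interior_Icc] at hz
      exact sub_nonpos.2 (hcomp z (hIoo hz) (hlt z ⟨hz.1.le, hz.2⟩))
  have := hanti ⟨le_rfl, hc.1.le⟩ ⟨hc.1.le, le_rfl⟩ hc.1.le
  simp only [Pi.sub_apply] at this
  linarith

theorem exists_lt_of_intervalIntegral_lt {f : ℝ → ℝ} {a b c : ℝ} (hab : a ≤ b)
    (hf : IntervalIntegrable f volume a b) (h : ∫ x in a..b, f x < c * (b - a)) :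
    ∃ x ∈ Icc a b, f x < c := by
  by_contra! H
  have := intervalIntegral.integral_mono_on hab intervalIntegrable_const hf H
  rw [intervalIntegral.integral_const, smul_eq_mul] at this
  linarith

theorem intervalIntegral_le_integral_Ioi {f : ℝ → ℝ} {a b c : ℝ} (hca : c ≤ a) (hab : a ≤ b)
    (hf : IntegrableOn f (Ioi c)) (hf0 : ∀ x > c, 0 ≤ f x) :
    ∫ x in a..b, f x ≤ ∫ x in Ioi c, f x := by
  rw [intervalIntegral.integral_of_le hab]
  refine setIntegral_mono_set hf ?_ (LE.le.eventuallyLE ?_)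
  · exact (ae_restrict_iff' measurableSet_Ioi).2 (Filter.Eventually.of_forall hf0)
  · exact fun x hx => hca.trans_lt hx.1

theorem hasDerivAt_div_one_add_mul_sub {α b t u : ℝ} (h : 1 + α * b * (t - u) ≠ 0) :
    HasDerivAt (fun u => b / (1 + α * b * (t - u))) (α * (b / (1 + α * b * (t - u))) ^ 2) u := by
  have hden : HasDerivAt (fun u => 1 + α * b * (t - u)) (-(α * b)) u := by
    simpa using (((hasDerivAt_id u).const_sub t).const_mul (α * b)).const_add 1
  refine ((hasDerivAt_const u b).div hden h).congr_deriv ?_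
  field_simp
  ring

theorem integral_div_one_add_mul_sub {α b a t : ℝ} (hα : α ≠ 0) (hαb : 0 ≤ α * b) (hat : a ≤ t) :
    ∫ u in a..t, b / (1 + α * b * (t - u)) = log (1 + α * b * (t - a)) / α := by
  have hden : ∀ u ∈ uIcc a t, 0 < 1 + α * b * (t - u) := fun u hu => by
    have := mul_nonneg hαb (sub_nonneg.2 (uIcc_of_le hat ▸ hu).2)
    linarith
  have hprim : ∀ u ∈ uIcc a t, HasDerivAt (fun u => -log (1 + α * b * (t - u)) / α)
      (b / (1 + α * b * (t - u))) u := fun u hu => by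
    have hlin : HasDerivAt (fun u => 1 + α * b * (t - u)) (-(α * b)) u := by
      simpa using (((hasDerivAt_id u).const_sub t).const_mul (α * b)).const_add 1
    refine ((hlin.log (hden u hu).ne').neg.div_const α).congr_deriv ?_
    field_simp
  have hcont : ContinuousOn (fun u => b / (1 + α * b * (t - u))) (uIcc a t) :=
    continuousOn_const.div (by fun_prop) fun u hu => (hden u hu).ne'
  rw [intervalIntegral.integral_eq_sub_of_hasDerivAt hprim hcont.intervalIntegrable]
  simp only [sub_self, mul_zero, add_zero, log_one, neg_zero, zero_div, zero_sub]
  ring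

theorem one_add_mul_le_exp_integral {φ φ' : ℝ → ℝ} {α β t : ℝ}
    (hnonneg : ∀ x ≥ 0, 0 ≤ φ x) (hcont : ContinuousOn φ (Ici 0))
    (hderiv : ∀ x > 0, HasDerivAt φ (φ' x) x) (hint : IntegrableOn φ (Ioi 0))
    (hα : 0 < α) (hbound : ∀ x > 0, φ x ≤ β → φ' x ≤ α * φ x ^ 2)
    (ht : 0 ≤ t) (hφt : φ t ≤ β) :
    1 + α * φ t * t ≤ exp (α * ∫ x in Ioi 0, φ x) := by
  set b := φ t
  have hb : 0 ≤ b := hnonneg t ht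
  set y := fun u => b / (1 + α * b * (t - u))
  have hden : ∀ u ≤ t, 1 ≤ 1 + α * b * (t - u) := fun u hu => by
    have := mul_nonneg (mul_nonneg hα.le hb) (sub_nonneg.2 hu)
    linarith
  have hy_le : ∀ u ≤ t, y u ≤ b := fun u hu => div_le_self hb (hden u hu)
  have hy' : ∀ u ≤ t, HasDerivAt y (α * y u ^ 2) u := fun u hu =>
    hasDerivAt_div_one_add_mul_sub (by linarith [hden u hu])
  have hy_cont : ContinuousOn y (Icc 0 t) := fun u hu =>
    (hy' u hu.2).continuousAt.continuousWithinAt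
  have hφ_cont : ContinuousOn φ (Icc 0 t) := hcont.mono Icc_subset_Ici_self
  have hcomp : ∀ u ∈ Icc 0 t, y u ≤ φ u := by
    refine le_on_Icc_of_hasDerivAt_le_of_lt hφ_cont hy_cont (fun x hx => hderiv x hx.1)
      (fun x hx => hy' x hx.2.le) (by simp [y, b]) fun x hx hlt => ?_
    have hφx : 0 ≤ φ x := hnonneg x hx.1.le
    calc φ' x ≤ α * φ x ^ 2 := hbound x hx.1 ((hlt.le.trans (hy_le x hx.2.le)).trans hφt)
      _ ≤ α * y x ^ 2 := by gcongr
  have hlog : log (1 + α * b * t) / α ≤ ∫ x in Ioi 0, φ x := by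
    calc log (1 + α * b * t) / α = ∫ u in 0..t, y u := by
          simpa using (integral_div_one_add_mul_sub hα.ne' (mul_nonneg hα.le hb) ht).symm
      _ ≤ ∫ u in 0..t, φ u := intervalIntegral.integral_mono_on ht
          (hy_cont.intervalIntegrable_of_Icc ht) (hφ_cont.intervalIntegrable_of_Icc ht) hcomp
      _ ≤ ∫ x in Ioi 0, φ x :=
          intervalIntegral_le_integral_Ioi le_rfl ht hint fun x hx => hnonneg x hx.le
  calc 1 + α * b * t = exp (log (1 + α * b * t)) := by
        rw [exp_log (by positivity)]
    _ ≤ exp (α * ∫ x in Ioi 0, φ x) := by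
        rw [exp_le_exp, ← div_le_iff₀' hα]
        exact hlog

theorem lt_of_integral_div_mul_exp_lt {φ φ' : ℝ → ℝ} {α β t : ℝ}
    (hnonneg : ∀ x ≥ 0, 0 ≤ φ x) (hcont : ContinuousOn φ (Ici 0))
    (hderiv : ∀ x > 0, HasDerivAt φ (φ' x) x) (hint : IntegrableOn φ (Ioi 0))
    (hα : 0 < α) (hβ : 0 < β) (hbound : ∀ x > 0, φ x ≤ β → φ' x ≤ α * φ x ^ 2)
    (ht : (∫ x in Ioi 0, φ x) / β * exp (α * ∫ x in Ioi 0, φ x) < t) :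
    φ t < β := by
  set Λ := ∫ x in Ioi 0, φ x
  have hΛ : 0 ≤ Λ := setIntegral_nonneg measurableSet_Ioi fun x hx => hnonneg x (le_of_lt hx)
  have ht0 : 0 < t := lt_of_le_of_lt (by positivity) ht
  set c := β * exp (-(α * Λ))
  have hcβ : c * exp (α * Λ) = β := by rw [mul_assoc, ← exp_add, neg_add_cancel, exp_zero, mul_one]
  have hΛct : Λ < c * t := by
    calc Λ = Λ / β * exp (α * Λ) * c := by
          rw [mul_assoc, mul_comm (exp _), hcβ, div_mul_cancel₀ _ hβ.ne']
      _ < t * c := mul_lt_mul_of_pos_right ht (by positivity)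
      _ = c * t := mul_comm _ _
  have hφ_cont : ∀ {a b : ℝ}, 0 ≤ a → ContinuousOn φ (Icc a b) := fun ha =>
    hcont.mono fun x hx => ha.trans hx.1
  have hφ_int : ∀ {a b : ℝ}, 0 ≤ a → a ≤ b → ∫ x in a..b, φ x ≤ Λ := fun ha hab =>
    intervalIntegral_le_integral_Ioi ha hab hint fun x hx => hnonneg x hx.le
  obtain ⟨s, hs, hφs⟩ := exists_lt_of_intervalIntegral_lt ht0.le
    ((hφ_cont le_rfl).intervalIntegrable_of_Icc ht0.le)
    (by rw [sub_zero]; exact (hφ_int le_rfl ht0.le).trans_lt hΛct)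
  have hcβ' : c ≤ β := by
    rw [← hcβ]; exact le_mul_of_one_le_right (by positivity) (one_le_exp (by positivity))
  refine lt_on_Icc_of_lt_on_Ico (g := fun _ => β) (hφ_cont hs.1) continuousOn_const
    (hφs.trans_le hcβ') (fun r hr hlt => ?_) t ⟨hs.2, le_rfl⟩
  have hgronwall := le_mul_exp_integral_of_hasDerivAt_le_mul (k := fun x => α * φ x) hr.1.le
    (hφ_cont hs.1) ((hφ_cont hs.1).const_smul α) (fun x hx => hderiv x (hs.1.trans_lt hx.1))
    fun x hx => by
      rw [mul_assoc, ← sq]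
      exact hbound x (hs.1.trans_lt hx.1) (hlt x ⟨hx.1.le, hx.2⟩).le
  calc φ r ≤ φ s * exp (∫ x in s..r, α * φ x) := hgronwall
    _ ≤ φ s * exp (α * Λ) := by
        have := hφ_int hs.1 hr.1.le
        gcongr
        · exact hnonneg s hs.1
        · rw [intervalIntegral.integral_const_mul]; gcongr
    _ < c * exp (α * Λ) := by gcongr
    _ = β := hcβ

theorem le_div_of_integral_div_mul_exp_lt {φ φ' : ℝ → ℝ} {α β t : ℝ}
    (hnonneg : ∀ x ≥ 0, 0 ≤ φ x) (hcont : ContinuousOn φ (Ici 0))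
    (hderiv : ∀ x > 0, HasDerivAt φ (φ' x) x) (hint : IntegrableOn φ (Ioi 0))
    (hα : 0 < α) (hβ : 0 < β) (hbound : ∀ x > 0, φ x ≤ β → φ' x ≤ α * φ x ^ 2)
    (ht : (∫ x in Ioi 0, φ x) / β * exp (α * ∫ x in Ioi 0, φ x) < t) :
    φ t ≤ (exp (α * ∫ x in Ioi 0, φ x) - 1) / (α * t) := by
  have hΛ : 0 ≤ ∫ x in Ioi 0, φ x :=
    setIntegral_nonneg measurableSet_Ioi fun x hx => hnonneg x (le_of_lt hx)
  have ht0 : 0 < t := lt_of_le_of_lt (by positivity) ht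
  have := one_add_mul_le_exp_integral hnonneg hcont hderiv hint hα hbound ht0.le
    (lt_of_integral_div_mul_exp_lt hnonneg hcont hderiv hint hα hβ hbound ht).le
  rw [le_div_iff₀ (by positivity)]
  linarith

theorem stmt0_general (φ φ' g : ℝ → ℝ) (α β Λ : ℝ)
    (hφ_nonneg : ∀ t ≥ (0:ℝ), 0 ≤ φ t)
    (hφ_deriv : ∀ t ≥ (0:ℝ), HasDerivWithinAt φ (φ' t) (Ici 0) t)
    (hint : IntegrableOn φ (Ioi 0) volume)
    (hΛ : Λ = ∫ t in Ioi (0:ℝ), φ t)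
    (hα : 0 < α) (hβ : 0 < β)
    (hgα : ∀ y ∈ Icc (0:ℝ) β, g y ≤ α * y ^ 2)
    (hφ'g : ∀ t ≥ (0:ℝ), φ' t ≤ g (φ t)) :
    ∀ t : ℝ, (Λ / β) * Real.exp (α * Λ) ≤ t →
      φ t ≤ (Real.exp (α * Λ) - 1) / (α * t) := by
  have hcont : ContinuousOn φ (Ici 0) := fun x hx => (hφ_deriv x hx).continuousWithinAt
  have hderiv : ∀ x > 0, HasDerivAt φ (φ' x) x := fun x hx =>
    (hφ_deriv x hx.le).hasDerivAt (Ici_mem_nhds hx)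
  have hbound : ∀ x > 0, φ x ≤ β → φ' x ≤ α * φ x ^ 2 := fun x hx hxβ =>
    (hφ'g x hx.le).trans (hgα _ ⟨hφ_nonneg x hx.le, hxβ⟩)
  have hΛ0 : 0 ≤ Λ := hΛ ▸ setIntegral_nonneg measurableSet_Ioi fun x hx => hφ_nonneg x hx.le
  intro t ht
  have ht0 : 0 ≤ t := le_trans (by positivity) ht
  have hφ_right : ContinuousWithinAt φ (Ioi t) t :=
    (hcont t ht0).mono fun x hx => ht0.trans (le_of_lt hx)
  have hrhs : ContinuousWithinAt (fun t => (exp (α * Λ) - 1) / (α * t)) (Ioi t) t := by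
    rcases ht0.eq_or_lt with rfl | ht0
    -- at `t = 0` the right-hand side is the junk value `x / 0 = 0`, continuous only as `Λ = 0`
    · have hΛ_zero : Λ = 0 := le_antisymm
        (by simpa using (div_le_iff₀ hβ).1 (nonpos_of_mul_nonpos_left ht (exp_pos _))) hΛ0
      simp only [hΛ_zero, mul_zero, exp_zero, sub_self, zero_div]
      exact continuousWithinAt_const
    · exact (continuousAt_const.div (continuousAt_id.const_mul α)
        (by positivity)).continuousWithinAt
  refine hφ_right.closure_le (by rw [closure_Ioi]; exact self_mem_Ici) hrhs fun t' ht' => ?_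
  subst hΛ
  exact le_div_of_integral_div_mul_exp_lt hφ_nonneg hcont hderiv hint hα hβ hbound
    (ht.trans_lt ht')

/-- Let `φ : [0,∞) → [0,∞)` be differentiable and `g : [0,∞) → [0,∞)`
locally Lipschitz. Suppose `Λ := ∫₀^∞ φ(t) dt < ∞`, `g(y) ≤ α y²` for `y ∈ [0,β]`
(with `α, β > 0`), and `φ'(t) ≤ g(φ(t))` for all `t ≥ 0`. Then for every
`t ≥ (Λ/β) exp(α Λ)` one has `φ(t) ≤ (exp(α Λ) − 1)/(α t)`. -/
theorem stmt0 (φ φ' g : ℝ → ℝ) (α β Λ : ℝ)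
    (hφ_nonneg : ∀ t ≥ (0:ℝ), 0 ≤ φ t)
    (hg_nonneg : ∀ y ≥ (0:ℝ), 0 ≤ g y)
    (hφ_deriv : ∀ t ≥ (0:ℝ), HasDerivWithinAt φ (φ' t) (Ici 0) t)
    (hg_lip : LocallyLipschitzOn (Ici 0) g)
    (hint : IntegrableOn φ (Ioi 0) volume)
    (hΛ : Λ = ∫ t in Ioi (0:ℝ), φ t)
    (hα : 0 < α) (hβ : 0 < β)
    (hgα : ∀ y ∈ Icc (0:ℝ) β, g y ≤ α * y ^ 2)
    (hφ'g : ∀ t ≥ (0:ℝ), φ' t ≤ g (φ t)) :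
    ∀ t : ℝ, (Λ / β) * Real.exp (α * Λ) ≤ t →
      φ t ≤ (Real.exp (α * Λ) - 1) / (α * t) :=
  stmt0_general φ φ' g α β Λ hφ_nonneg hφ_deriv hint hΛ hα hβ hgα hφ'g
end

section
/- Let H be a complex Hilbert space, A a bounded nonnegative self-adjoint operator on H, T > 0, and f : [0,T] → H continuous. Define w(t) := ∫₀ᵗ e^{−(t−s)A} f(s) ds (Bochner integral). Then for every α ∈ [0,1) and every t ∈ [0,T], ‖A^α w(t)‖ ≤ (t^{1−α}/(1−α)) · sup_{s ∈ [0,T]} ‖f(s)‖. -/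
/-!
For `τ > 0` the function `x ↦ x ^ α e^{-τx}` is bounded by `τ^{-α}` on `[0, ∞)`, so by the
continuous functional calculus `‖A^α e^{-τA}‖ ≤ τ^{-α}` for `A ≥ 0`. Moving `A^α` inside the
integral defining `w t` then bounds `‖A^α w t‖` by `(sup ‖f‖) ∫₀ᵗ (t - s)^{-α} ds`, and the
last integral is `t^{1-α}/(1-α)` because `α < 1`.
-/

open MeasureTheory

namespace Real

lemma rpow_le_exp {α y : ℝ} (hα0 : 0 ≤ α) (hα1 : α ≤ 1) (hy : 0 ≤ y) : y ^ α ≤ exp y := by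
  rcases le_total y 1 with hy1 | hy1
  · exact (rpow_le_one hy hy1 hα0).trans (one_le_exp hy)
  · calc y ^ α ≤ y ^ (1 : ℝ) := rpow_le_rpow_of_exponent_le hy1 hα1
      _ = y := rpow_one y
      _ ≤ y + 1 := le_add_of_nonneg_right zero_le_one
      _ ≤ exp y := add_one_le_exp y

lemma rpow_mul_exp_neg_mul_le {α τ x : ℝ} (hα0 : 0 ≤ α) (hα1 : α ≤ 1) (hτ : 0 < τ)
    (hx : 0 ≤ x) : x ^ α * exp (-(τ * x)) ≤ τ ^ (-α) := by
  have hτx : 0 ≤ τ * x := mul_nonneg hτ.le hx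
  have hscaled : (τ * x) ^ α * exp (-(τ * x)) ≤ 1 := by
    rw [exp_neg, ← div_eq_mul_inv, div_le_one (exp_pos _)]
    exact rpow_le_exp hα0 hα1 hτx
  calc x ^ α * exp (-(τ * x)) = τ ^ (-α) * ((τ * x) ^ α * exp (-(τ * x))) := by
        rw [mul_rpow hτ.le hx, ← mul_assoc, ← mul_assoc, ← rpow_add hτ, neg_add_cancel,
          rpow_zero, one_mul]
    _ ≤ τ ^ (-α) * 1 := mul_le_mul_of_nonneg_left hscaled (rpow_nonneg hτ.le _)
    _ = τ ^ (-α) := mul_one _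

end Real

lemma intervalIntegral.integral_sub_rpow_neg {α : ℝ} (hα : α < 1) (t : ℝ) :
    ∫ s in (0 : ℝ)..t, (t - s) ^ (-α) = t ^ (1 - α) / (1 - α) := by
  rw [intervalIntegral.integral_comp_sub_left (fun u : ℝ => u ^ (-α)) t, sub_self, sub_zero,
    integral_rpow (Or.inl (by linarith)), Real.zero_rpow (by linarith), sub_zero,
    neg_add_eq_sub]

lemma intervalIntegrable_sub_rpow_neg {α : ℝ} (hα : α < 1) (t : ℝ) :
    IntervalIntegrable (fun s => (t - s) ^ (-α)) volume 0 t := by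
  simpa using
    (intervalIntegral.intervalIntegrable_rpow' (a := 0) (b := t) (r := -α) (by linarith)
      |>.comp_sub_left t).symm

lemma norm_intervalIntegral_le_of_norm_le_sub_rpow_neg {E : Type*} [NormedAddCommGroup E]
    [NormedSpace ℝ E] {g : ℝ → E} {α t M : ℝ} (hα : α < 1) (ht : 0 ≤ t)
    (hg : ∀ s ∈ Set.Ioo 0 t, ‖g s‖ ≤ (t - s) ^ (-α) * M) :
    ‖∫ s in (0 : ℝ)..t, g s‖ ≤ t ^ (1 - α) / (1 - α) * M := by
  have hbound : ∀ᵐ s, s ∈ Set.Ioc 0 t → ‖g s‖ ≤ (t - s) ^ (-α) * M := by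
    filter_upwards [Measure.ae_ne volume t] with s hst hs
    exact hg s ⟨hs.1, lt_of_le_of_ne hs.2 hst⟩
  calc ‖∫ s in (0 : ℝ)..t, g s‖ ≤ ∫ s in (0 : ℝ)..t, (t - s) ^ (-α) * M :=
        intervalIntegral.norm_integral_le_of_norm_le ht hbound
          ((intervalIntegrable_sub_rpow_neg hα t).mul_const M)
    _ = t ^ (1 - α) / (1 - α) * M := by
        rw [intervalIntegral.integral_mul_const, intervalIntegral.integral_sub_rpow_neg hα]

lemma IsCompact.norm_le_iSup_norm {X E : Type*} [TopologicalSpace X] [NormedAddCommGroup E]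
    {K : Set X} (hK : IsCompact K) {f : X → E} (hf : ContinuousOn f K) {x : X} (hx : x ∈ K) :
    ‖f x‖ ≤ ⨆ y : K, ‖f y‖ := by
  have hbdd := (hK.image_of_continuousOn hf.norm).bddAbove
  rw [Set.image_eq_range] at hbdd
  exact le_ciSup hbdd ⟨x, hx⟩

section CStarAlgebra

variable {A : Type*} [CStarAlgebra A]

lemma cfc_exp_neg_mul_eq_exp {a : A} (ha : IsSelfAdjoint a) (τ : ℝ) :
    cfc (fun x : ℝ => Real.exp (-(τ * x))) a = NormedSpace.exp ((-τ) • a) := by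
  rw [← CFC.real_exp_eq_normedSpace_exp, ← cfc_comp_smul (-τ) Real.exp a]
  simp only [smul_eq_mul, neg_mul]

lemma continuous_cfc_exp_neg_mul {a : A} (ha : IsSelfAdjoint a) :
    Continuous fun τ : ℝ => cfc (fun x : ℝ => Real.exp (-(τ * x))) a := by
  simp only [cfc_exp_neg_mul_eq_exp ha]
  have hexp : Continuous (NormedSpace.exp : A → A) :=
    continuous_iff_continuousAt.2 fun x => (NormedSpace.exp_analytic (𝕂 := ℂ) x).continuousAt
  exact hexp.comp (by fun_prop)

variable [PartialOrder A] [StarOrderedRing A]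

lemma norm_cfc_rpow_mul_exp_neg_mul_le {a : A} (ha : 0 ≤ a) {α τ : ℝ} (hα0 : 0 ≤ α)
    (hα1 : α ≤ 1) (hτ : 0 < τ) :
    ‖cfc (fun x : ℝ => x ^ α * Real.exp (-(τ * x))) a‖ ≤ τ ^ (-α) := by
  refine norm_cfc_le (Real.rpow_nonneg hτ.le _) fun x hx => ?_
  have hx0 : 0 ≤ x := spectrum_nonneg_of_nonneg ha hx
  rw [Real.norm_of_nonneg (by positivity)]
  exact Real.rpow_mul_exp_neg_mul_le hα0 hα1 hτ hx0

end CStarAlgebra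

theorem stmt5_general {H : Type*} [NormedAddCommGroup H] [InnerProductSpace ℂ H] [CompleteSpace H]
    (A : H →L[ℂ] H) (hA : 0 ≤ A) (T : ℝ)
    (f : ℝ → H) (hf : ContinuousOn f (Set.Icc 0 T))
    (w : ℝ → H)
    (hw : ∀ t, w t = ∫ s in (0:ℝ)..t, (cfc (fun x : ℝ => Real.exp (-((t - s) * x))) A) (f s)) :
    ∀ α : ℝ, 0 ≤ α → α < 1 → ∀ t ∈ Set.Icc (0:ℝ) T,
      ‖(cfc (fun x : ℝ => x ^ α) A) (w t)‖
        ≤ (t ^ (1 - α) / (1 - α)) * ⨆ s : Set.Icc (0:ℝ) T, ‖f s‖ := by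
  intro α hα0 hα1 t ⟨ht0, htT⟩
  have hA_sa : IsSelfAdjoint A := .of_nonneg hA
  have hint : IntervalIntegrable
      (fun s => (cfc (fun x : ℝ => Real.exp (-((t - s) * x))) A) (f s)) volume 0 t := by
    refine ContinuousOn.intervalIntegrable ?_
    rw [Set.uIcc_of_le ht0]
    exact ((continuous_cfc_exp_neg_mul hA_sa).comp (continuous_sub_left t)).continuousOn.clm_apply
      (hf.mono (Set.Icc_subset_Icc le_rfl htT))
  rw [hw t, ← ContinuousLinearMap.intervalIntegral_comp_comm _ hint]
  refine norm_intervalIntegral_le_of_norm_le_sub_rpow_neg hα1 ht0 fun s hs => ?_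
  rw [← mul_apply_eq_comp,
    ← cfc_mul (fun x : ℝ => x ^ α) _ A (Real.continuous_rpow_const hα0).continuousOn]
  calc _ ≤ ‖cfc (fun x : ℝ => x ^ α * Real.exp (-((t - s) * x))) A‖ * ‖f s‖ :=
        ContinuousLinearMap.le_opNorm _ _
    _ ≤ (t - s) ^ (-α) * ⨆ s : Set.Icc (0:ℝ) T, ‖f s‖ :=
        mul_le_mul (norm_cfc_rpow_mul_exp_neg_mul_le hA hα0 hα1.le (sub_pos.2 hs.2))
          (isCompact_Icc.norm_le_iSup_norm hf ⟨hs.1.le, hs.2.le.trans htT⟩) (norm_nonneg _)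
          (Real.rpow_nonneg (sub_pos.2 hs.2).le _)

/-- Let `A` be a bounded nonnegative self-adjoint operator on a complex
Hilbert space `H`, `T > 0`, and `f : [0,T] → H` continuous. With
`w(t) := ∫₀ᵗ e^{−(t−s)A} f(s) ds`, for every `α ∈ [0,1)` and `t ∈ [0,T]`,
`‖A^α w(t)‖ ≤ (t^{1−α}/(1−α)) · sup_{s ∈ [0,T]} ‖f(s)‖`. -/
theorem stmt5 {H : Type*} [NormedAddCommGroup H] [InnerProductSpace ℂ H] [CompleteSpace H]
    (A : H →L[ℂ] H) (hA : 0 ≤ A) (T : ℝ) (hT : 0 < T)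
    (f : ℝ → H) (hf : ContinuousOn f (Set.Icc 0 T))
    (w : ℝ → H)
    (hw : ∀ t, w t = ∫ s in (0:ℝ)..t, (cfc (fun x : ℝ => Real.exp (-((t - s) * x))) A) (f s)) :
    ∀ α : ℝ, 0 ≤ α → α < 1 → ∀ t ∈ Set.Icc (0:ℝ) T,
      ‖(cfc (fun x : ℝ => x ^ α) A) (w t)‖
        ≤ (t ^ (1 - α) / (1 - α)) * ⨆ s : Set.Icc (0:ℝ) T, ‖f s‖ :=
  stmt5_general A hA T f hf w hw
end

section
/- (Galilean invariance of the tamed Navier–Stokes equation) Let ν, κ > 0, N ≥ 0, and U, v ∈ ℝ³ be constant vectors. If (u, P) is a classical solution of the tamed Navier–Stokes equation with parameters (ν, κ, N, U), then the pair (ũ, P̃) defined by ũ(t,x) := u(t, x − t·v) + v and P̃(t,x) := P(t, x − t·v) is a classical solution of the tamed Navier–Stokes equation with parameters (ν, κ, N, U + v). -/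
noncomputable section

open Set

/-- Euclidean 3-space. -/
abbrev E3 : Type := EuclideanSpace ℝ (Fin 3)

/-- The `i`-th standard basis vector of `ℝ³`. -/
def e3 (i : Fin 3) : E3 := EuclideanSpace.single i 1

/-- Directional (convective) derivative `(v·∇)f` of a vector field `f` at `x`:
the Fréchet derivative of `f` at `x` applied to the vector `v`. -/
def conv (v : E3) (f : E3 → E3) (x : E3) : E3 := fderiv ℝ f x v

/-- Componentwise Laplacian `Δf = ∑ᵢ ∂ᵢ∂ᵢ f` of a vector field `f` at `x`. -/
def lap3 (f : E3 → E3) (x : E3) : E3 :=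
  ∑ i : Fin 3, fderiv ℝ (fun y => fderiv ℝ f y (e3 i)) x (e3 i)

/-- Divergence `div f = ∑ᵢ ∂ᵢ fᵢ` of a vector field `f` at `x`. -/
def div3 (f : E3 → E3) (x : E3) : ℝ :=
  ∑ i : Fin 3, fderiv ℝ f x (e3 i) i

/-- The taming function `g^{ν,κ}_N(r) = (κ/ν)·max(r − N, 0)`. -/
def tamingFn (ν κ N r : ℝ) : ℝ := (κ / ν) * max (r - N) 0

/-- `S(t) = sup_{x ∈ ℝ³} |u(t,x) − U|²`. -/
def supSq (U : E3) (u : ℝ → E3 → E3) (t : ℝ) : ℝ := ⨆ x : E3, ‖u t x - U‖ ^ 2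

/-- `(u, P)` is a classical solution of the tamed Navier–Stokes equation on `ℝ³`
with parameters `(ν, κ, N, U)`: `u` is `C²`, `P` is `C¹`, `x ↦ u(t,x) − U` is bounded for
each `t`, and for all `(t,x)`,
`∂ₜu = ν Δu − (u·∇)u + ∇P − g^{ν,κ}_N(S(t))·(u − U)` and `div u = 0`. -/
def IsTamedNSSolution (ν κ N : ℝ) (U : E3) (u : ℝ → E3 → E3) (P : ℝ → E3 → ℝ) : Prop :=
  ContDiff ℝ 2 (fun p : ℝ × E3 => u p.1 p.2) ∧
  ContDiff ℝ 1 (fun p : ℝ × E3 => P p.1 p.2) ∧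
  (∀ t : ℝ, ∃ M : ℝ, ∀ x : E3, ‖u t x - U‖ ≤ M) ∧
  (∀ (t : ℝ) (x : E3),
    deriv (fun s => u s x) t =
      ν • lap3 (u t) x - conv (u t x) (u t) x + gradient (P t) x
        - tamingFn ν κ N (supSq U u t) • (u t x - U)) ∧
  (∀ (t : ℝ) (x : E3), div3 (u t) x = 0)

/-! Galilean invariance: the boost `ũ(t,x) = u(t, x - t v) + v` leaves all spatial derivatives
unchanged up to the shift `x ↦ x - t v`, and its time derivative picks up exactly `-(v·∇)u`,
which cancels the extra term `(v·∇)u` in the convection `(ũ·∇)ũ`. The deviation `ũ - (U + v)`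
is a shift of `u - U`, so the taming term is unchanged. -/

section

variable {E F : Type*} [NormedAddCommGroup E] [NormedSpace ℝ E]
  [NormedAddCommGroup F] [NormedSpace ℝ F]

theorem ContDiff.comp_sub_smul {n : WithTop ℕ∞} {f : ℝ → E → F}
    (hf : ContDiff ℝ n (fun p : ℝ × E => f p.1 p.2)) (v : E) :
    ContDiff ℝ n (fun p : ℝ × E => f p.1 (p.2 - p.1 • v)) :=
  hf.comp (contDiff_fst.prodMk (contDiff_snd.sub (contDiff_fst.smul contDiff_const)))

theorem fderiv_comp_sub_add_const (f : E → F) (a : E) (w : F) (x : E) :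
    fderiv ℝ (fun y => f (y - a) + w) x = fderiv ℝ f (x - a) := by
  rw [fderiv_add_const, fderiv_comp_sub]

theorem deriv_comp_sub_smul {f : ℝ → E → F} {t : ℝ} {x v : E}
    (hf : DifferentiableAt ℝ (fun p : ℝ × E => f p.1 p.2) (t, x - t • v)) :
    deriv (fun s => f s (x - s • v)) t
      = deriv (fun s => f s (x - t • v)) t - fderiv ℝ (f t) (x - t • v) v := by
  set D := fderiv ℝ (fun p : ℝ × E => f p.1 p.2) (t, x - t • v)
  have hD : HasFDerivAt (fun p : ℝ × E => f p.1 p.2) D (t, x - t • v) := hf.hasFDerivAt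
  have h_path : HasDerivAt (fun s : ℝ => (s, x - s • v)) ((1 : ℝ), -v) t :=
    (hasDerivAt_id t).prodMk (by simpa using ((hasDerivAt_id t).smul_const v).const_sub x)
  have h_time : HasDerivAt (fun s => f s (x - t • v)) (D (1, 0)) t :=
    hD.comp_hasDerivAt (f := fun s : ℝ => (s, x - t • v)) t
      ((hasDerivAt_id t).prodMk (hasDerivAt_const t _))
  have h_space : HasFDerivAt (f t) (D.comp (ContinuousLinearMap.inr ℝ ℝ E)) (x - t • v) :=
    hD.comp _ (hasFDerivAt_prodMk_right t _)
  have h_total : HasDerivAt (fun s => f s (x - s • v)) (D (1, -v)) t :=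
    hD.comp_hasDerivAt (f := fun s : ℝ => (s, x - s • v)) t h_path
  rw [h_total.deriv, h_time.deriv, h_space.fderiv,
    ContinuousLinearMap.comp_apply, ContinuousLinearMap.inr_apply, ← map_sub]
  simp

end

theorem gradient_comp_sub (p : E3 → ℝ) (a x : E3) :
    gradient (fun y => p (y - a)) x = gradient p (x - a) := by
  rw [gradient, gradient, fderiv_comp_sub]

theorem lap3_comp_sub_add_const (f : E3 → E3) (a w x : E3) :
    lap3 (fun y => f (y - a) + w) x = lap3 f (x - a) := by
  simp only [lap3, fderiv_comp_sub_add_const]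
  exact Finset.sum_congr rfl fun i _ => by
    rw [fderiv_comp_sub (f := fun z => fderiv ℝ f z (e3 i))]

theorem div3_comp_sub_add_const (f : E3 → E3) (a w x : E3) :
    div3 (fun y => f (y - a) + w) x = div3 f (x - a) := by
  simp only [div3, fderiv_comp_sub_add_const]

theorem supSq_galilean (U v : E3) (u : ℝ → E3 → E3) (t : ℝ) :
    supSq (U + v) (fun t x => u t (x - t • v) + v) t = supSq U u t := by
  simp only [supSq, add_sub_add_right_eq_sub]
  exact (Equiv.subRight (t • v)).iSup_comp (g := fun y => ‖u t y - U‖ ^ 2)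

theorem stmt6_general (ν κ N : ℝ) (U v : E3)
    (u : ℝ → E3 → E3) (P : ℝ → E3 → ℝ)
    (h : IsTamedNSSolution ν κ N U u P) :
    IsTamedNSSolution ν κ N (U + v)
      (fun t x => u t (x - t • v) + v)
      (fun t x => P t (x - t • v)) := by
  obtain ⟨hu, hP, hbdd, hpde, hdiv⟩ := h
  refine ⟨(hu.comp_sub_smul v).add contDiff_const, hP.comp_sub_smul v, fun t => ?_,
    fun t x => ?_, fun t x => ?_⟩
  · obtain ⟨M, hM⟩ := hbdd t
    exact ⟨M, fun x => by simpa only [add_sub_add_right_eq_sub] using hM (x - t • v)⟩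
  · beta_reduce
    rw [deriv_add_const, deriv_comp_sub_smul (hu.differentiable two_ne_zero _), hpde,
      lap3_comp_sub_add_const, gradient_comp_sub, supSq_galilean, add_sub_add_right_eq_sub]
    simp only [conv, fderiv_comp_sub_add_const, map_add]
    abel
  · exact (div3_comp_sub_add_const _ _ _ _).trans (hdiv t _)

/-- (Galilean invariance of the tamed Navier–Stokes equation.)
If `(u, P)` is a classical solution with parameters `(ν, κ, N, U)` and `v ∈ ℝ³`, then
`ũ(t,x) := u(t, x − t·v) + v`, `P̃(t,x) := P(t, x − t·v)` is a classical solution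
with parameters `(ν, κ, N, U + v)`. -/
theorem stmt6 (ν κ N : ℝ) (hν : 0 < ν) (hκ : 0 < κ) (hN : 0 ≤ N) (U v : E3)
    (u : ℝ → E3 → E3) (P : ℝ → E3 → ℝ)
    (h : IsTamedNSSolution ν κ N U u P) :
    IsTamedNSSolution ν κ N (U + v)
      (fun t x => u t (x - t • v) + v)
      (fun t x => P t (x - t • v)) :=
  stmt6_general ν κ N U v u P h

end
end

section
/- (Rotation symmetry of the tamed Navier–Stokes equation) Let ν, κ > 0, N ≥ 0, U ∈ ℝ³ a constant vector, and Q a 3×3 orthogonal matrix (Q·Qᵀ = I). If (u, P) is a classical solution of the tamed Navier–Stokes equation with parameters (ν, κ, N, U), then the pair (ũ, P̃) defined by ũ(t,x) := Qᵀ·u(t, Q·x) and P̃(t,x) := P(t, Q·x) is a classical solution of the tamed Navier–Stokes equation with parameters (ν, κ, N, Qᵀ·U). -/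
noncomputable section

open Set

/-! Every term of the tamed Navier–Stokes equation is equivariant under an isometric change of
variables `x ↦ R x`, `u ↦ R⁻¹ ∘ u ∘ R`: first derivatives are conjugated by `R`, so the
convective term and the gradient transform like vectors, while the Laplacian and the divergence
are traces, hence independent of the orthonormal basis. The taming coefficient only sees
`sup ‖u - U‖`, which is unchanged since `R` is a norm-preserving bijection. -/

open InnerProductSpace Laplacian

section Calculus

variable {𝕜 : Type*} [NontriviallyNormedField 𝕜]
  {E E' F G : Type*} [NormedAddCommGroup E] [NormedSpace 𝕜 E] [NormedAddCommGroup E']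
  [NormedSpace 𝕜 E'] [NormedAddCommGroup F] [NormedSpace 𝕜 F] [NormedAddCommGroup G]
  [NormedSpace 𝕜 G]

theorem ContinuousLinearEquiv.deriv_comp_left (B : F ≃L[𝕜] G) (f : 𝕜 → F) (t : 𝕜) :
    deriv (fun s => B (f s)) t = B (deriv f t) :=
  congrArg (· 1) (B.comp_fderiv (f := f) (x := t))

theorem ContinuousLinearEquiv.fderiv_conj_apply (A : E' ≃L[𝕜] E) (B : F ≃L[𝕜] G) (f : E → F)
    (x w : E') : fderiv 𝕜 (fun y => B (f (A y))) x w = B (fderiv 𝕜 f (A x) (A w)) := by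
  have hcomp := B.comp_fderiv (f := f ∘ A) (x := x)
  rw [A.comp_right_fderiv] at hcomp
  exact congrArg (· w) hcomp

end Calculus

section InnerProduct

variable {E E' F : Type*} [NormedAddCommGroup E] [InnerProductSpace ℝ E]
  [NormedAddCommGroup E'] [InnerProductSpace ℝ E'] [NormedAddCommGroup F] [NormedSpace ℝ F]

theorem LinearIsometryEquiv.gradient_comp [CompleteSpace E] [CompleteSpace E']
    (R : E ≃ₗᵢ[ℝ] E') (P : E' → ℝ) (x : E) :
    gradient (fun y => P (R y)) x = R.symm (gradient P (R x)) := by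
  apply (toDual ℝ E).injective
  ext v
  have hfd := R.toContinuousLinearEquiv.comp_right_fderiv (f := P) (x := x)
  simp only [gradient, toDual_apply_apply, LinearIsometryEquiv.inner_map_eq_flip, R.symm_symm,
    toDual_symm_apply]
  exact congrArg (· v) hfd

theorem LinearIsometryEquiv.laplacian_comp [FiniteDimensional ℝ E] [FiniteDimensional ℝ E']
    (R : E ≃ₗᵢ[ℝ] E') (f : E' → F) (x : E) :
    Δ (fun y => f (R y)) x = Δ f (R x) := by
  have hit := R.toContinuousLinearEquiv.iteratedFDerivWithin_comp_right f uniqueDiffOn_univ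
    (mem_univ (R x)) 2
  simp only [preimage_univ, iteratedFDerivWithin_univ] at hit
  let b := stdOrthonormalBasis ℝ E
  rw [laplacian_eq_iteratedFDeriv_orthonormalBasis _ b,
    laplacian_eq_iteratedFDeriv_orthonormalBasis _ (b.map R)]
  refine Finset.sum_congr rfl fun i _ => ?_
  change iteratedFDeriv ℝ 2 (f ∘ R.toContinuousLinearEquiv) x _ = _
  rw [hit, ContinuousMultilinearMap.compContinuousLinearMap_apply]
  congr 1
  ext j : 1
  fin_cases j <;> rfl

end InnerProduct

theorem e3_eq_basisFun (i : Fin 3) : e3 i = EuclideanSpace.basisFun (Fin 3) ℝ i :=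
  (EuclideanSpace.basisFun_apply _ _ i).symm

theorem lap3_eq_laplacian {f : E3 → E3} {x : E3} (hf : DifferentiableAt ℝ (fderiv ℝ f) x) :
    lap3 f x = Δ f x := by
  rw [laplacian_eq_iteratedFDeriv_orthonormalBasis f (EuclideanSpace.basisFun (Fin 3) ℝ), lap3]
  refine Finset.sum_congr rfl fun i _ => ?_
  rw [iteratedFDeriv_two_apply, e3_eq_basisFun, fderiv_clm_apply hf (differentiableAt_const _)]
  simp

theorem div3_eq_trace (f : E3 → E3) (x : E3) :
    div3 f x = LinearMap.trace ℝ E3 (fderiv ℝ f x) := by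
  rw [LinearMap.trace_eq_sum_inner _ (EuclideanSpace.basisFun (Fin 3) ℝ), div3]
  refine Finset.sum_congr rfl fun i _ => ?_
  simp [e3_eq_basisFun, EuclideanSpace.inner_single_left]

section Rotation

variable (R : E3 ≃ₗᵢ[ℝ] E3)

theorem fderiv_rotate_apply (f : E3 → E3) (x w : E3) :
    fderiv ℝ (fun y => R.symm (f (R y))) x w = R.symm (fderiv ℝ f (R x) (R w)) :=
  ContinuousLinearEquiv.fderiv_conj_apply R.toContinuousLinearEquiv
    R.symm.toContinuousLinearEquiv f x w

theorem conv_rotate (v : E3) (f : E3 → E3) (x : E3) :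
    conv (R.symm v) (fun y => R.symm (f (R y))) x = R.symm (conv v f (R x)) := by
  rw [conv, conv, fderiv_rotate_apply, R.apply_symm_apply]

theorem div3_rotate (f : E3 → E3) (x : E3) :
    div3 (fun y => R.symm (f (R y))) x = div3 f (R x) := by
  have hconj : fderiv ℝ (fun y => R.symm (f (R y))) x
      = R.toLinearEquiv.symm.conj (fderiv ℝ f (R x) : E3 →ₗ[ℝ] E3) := by
    ext1 w
    exact fderiv_rotate_apply R f x w
  rw [div3_eq_trace, div3_eq_trace, hconj, LinearMap.trace_conj']

theorem lap3_rotate {f : E3 → E3} {x : E3} (hf : ContDiffAt ℝ 2 f (R x)) :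
    lap3 (fun y => R.symm (f (R y))) x = R.symm (lap3 f (R x)) := by
  have hrot : ContDiffAt ℝ 2 (fun y => R.symm (f (R y))) x :=
    R.symm.contDiff.contDiffAt.comp x (hf.comp x R.contDiff.contDiffAt)
  have hdiff : ∀ {g : E3 → E3} {y : E3}, ContDiffAt ℝ 2 g y →
      DifferentiableAt ℝ (fderiv ℝ g) y := fun hg =>
    (hg.fderiv_right (m := 1) (by norm_num)).differentiableAt (by norm_num)
  rw [lap3_eq_laplacian (hdiff hrot), lap3_eq_laplacian (hdiff hf)]
  change Δ (R.symm.toContinuousLinearEquiv ∘ (f ∘ R)) x = _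
  rw [laplacian_CLE_comp_left]
  exact congrArg R.symm (R.laplacian_comp f x)

theorem supSq_rotate (U : E3) (u : ℝ → E3 → E3) :
    supSq (R.symm U) (fun t x => R.symm (u t (R x))) = supSq U u := by
  funext t
  simp only [supSq, ← map_sub, LinearIsometryEquiv.norm_map]
  exact R.surjective.iSup_comp (fun y => ‖u t y - U‖ ^ 2)

end Rotation

theorem IsTamedNSSolution.rotate {ν κ N : ℝ} {U : E3} {u : ℝ → E3 → E3} {P : ℝ → E3 → ℝ}
    (h : IsTamedNSSolution ν κ N U u P) (R : E3 ≃ₗᵢ[ℝ] E3) :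
    IsTamedNSSolution ν κ N (R.symm U) (fun t x => R.symm (u t (R x))) (fun t x => P t (R x)) := by
  obtain ⟨hu, hP, hbdd, hpde, hdiv⟩ := h
  have hR : ContDiff ℝ 2 (fun p : ℝ × E3 => (p.1, R p.2)) :=
    contDiff_fst.prodMk (R.contDiff.comp contDiff_snd)
  have hut : ∀ t, ContDiff ℝ 2 (u t) := fun t => hu.comp (contDiff_const.prodMk contDiff_id)
  refine ⟨R.symm.contDiff.comp (hu.comp hR), hP.comp (hR.of_le (by norm_num)), fun t => ?_,
    fun t x => ?_, fun t x => ?_⟩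
  · obtain ⟨M, hM⟩ := hbdd t
    exact ⟨M, fun x => by simpa only [← map_sub, LinearIsometryEquiv.norm_map] using hM (R x)⟩
  · have hderiv : deriv (fun s => R.symm (u s (R x))) t =
        R.symm (deriv (fun s => u s (R x)) t) :=
      R.symm.toContinuousLinearEquiv.deriv_comp_left _ t
    beta_reduce
    rw [hderiv, hpde, supSq_rotate, lap3_rotate R (hut t).contDiffAt, conv_rotate,
      R.gradient_comp]
    simp only [map_sub, map_add, map_smul]
  · rw [div3_rotate, hdiv]

namespace Matrix

variable {n : Type*} [Fintype n] [DecidableEq n] {Q : Matrix n n ℝ}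

def toEuclideanIsometry (hQ : Q ∈ orthogonalGroup n ℝ) :
    EuclideanSpace ℝ n ≃ₗᵢ[ℝ] EuclideanSpace ℝ n :=
  Unitary.linearIsometryEquiv ⟨toEuclideanCLM (n := n) (𝕜 := ℝ) Q, Unitary.map_mem _ hQ⟩

theorem toEuclideanIsometry_apply (hQ : Q ∈ orthogonalGroup n ℝ) (x : EuclideanSpace ℝ n) :
    toEuclideanIsometry hQ x = toEuclideanLin Q x :=
  rfl

theorem toEuclideanIsometry_symm_apply (hQ : Q ∈ orthogonalGroup n ℝ) (x : EuclideanSpace ℝ n) :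
    (toEuclideanIsometry hQ).symm x = toEuclideanLin Qᵀ x := by
  have hstar :
      star (toEuclideanCLM (n := n) (𝕜 := ℝ) Q) = toEuclideanCLM (n := n) (𝕜 := ℝ) Qᵀ := by
    rw [← map_star, star_eq_conjTranspose, conjTranspose_eq_transpose_of_trivial]
  exact congrArg (· x) hstar

end Matrix

theorem stmt7_general (ν κ N : ℝ) (U : E3)
    (Q : Matrix (Fin 3) (Fin 3) ℝ) (hQ : Q * Q.transpose = 1)
    (u : ℝ → E3 → E3) (P : ℝ → E3 → ℝ)
    (h : IsTamedNSSolution ν κ N U u P) :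
    IsTamedNSSolution ν κ N (Matrix.toEuclideanLin Q.transpose U)
      (fun t x => Matrix.toEuclideanLin Q.transpose (u t (Matrix.toEuclideanLin Q x)))
      (fun t x => P t (Matrix.toEuclideanLin Q x)) := by
  have hQ' : Q ∈ Matrix.orthogonalGroup (Fin 3) ℝ :=
    (Matrix.mem_orthogonalGroup_iff (Fin 3) ℝ).mpr hQ
  simpa only [Matrix.toEuclideanIsometry_apply, Matrix.toEuclideanIsometry_symm_apply] using
    h.rotate (Matrix.toEuclideanIsometry hQ')

/-- (Rotation symmetry of the tamed Navier–Stokes equation.)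
If `Q` is a 3×3 orthogonal matrix (`Q·Qᵀ = 1`) and `(u, P)` is a classical solution with
parameters `(ν, κ, N, U)`, then `ũ(t,x) := Qᵀ·u(t, Q·x)`, `P̃(t,x) := P(t, Q·x)` is a
classical solution with parameters `(ν, κ, N, Qᵀ·U)`. -/
theorem stmt7 (ν κ N : ℝ) (hν : 0 < ν) (hκ : 0 < κ) (hN : 0 ≤ N) (U : E3)
    (Q : Matrix (Fin 3) (Fin 3) ℝ) (hQ : Q * Q.transpose = 1)
    (u : ℝ → E3 → E3) (P : ℝ → E3 → ℝ)
    (h : IsTamedNSSolution ν κ N U u P) :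
    IsTamedNSSolution ν κ N (Matrix.toEuclideanLin Q.transpose U)
      (fun t x => Matrix.toEuclideanLin Q.transpose (u t (Matrix.toEuclideanLin Q x)))
      (fun t x => P t (Matrix.toEuclideanLin Q x)) :=
  stmt7_general ν κ N U Q hQ u P h
end
end

section
/- (Scale invariance of the tamed Navier–Stokes equation) Let ν, κ > 0, N ≥ 0, U ∈ ℝ³ a constant vector, and λ > 0. If (u, P) is a classical solution of the tamed Navier–Stokes equation with parameters (ν, κ, N, U), then the pair (ũ, P̃) defined by ũ(t,x) := λ·u(λ²·t, λ·x) and P̃(t,x) := λ²·P(λ²·t, λ·x) is a classical solution of the tamed Navier–Stokes equation with parameters (ν, κ, λ²·N, λ·U). -/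
/-! Under `t ↦ λ²t`, `x ↦ λx` with prefactor `λ`, every term of the momentum equation — `∂ₜũ`,
`νΔũ`, `(ũ·∇)ũ`, `∇P̃` — picks up the same factor `λ³`, and so does the taming term, because
`S̃(t) = λ² S(λ²t)` and `(r, N) ↦ g_N(r)` is positively homogeneous of degree one. The derivative
identities need no regularity: `x ↦ λx` is a linear isomorphism for `λ ≠ 0`, and for `λ = 0` all
the functions involved are constant. -/

noncomputable section

open Set

section Rescaling

variable {E F : Type*} [NormedAddCommGroup E] [NormedSpace ℝ E]
  [NormedAddCommGroup F] [NormedSpace ℝ F]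

theorem fderiv_const_smul_comp_const_smul (a c : ℝ) (f : E → F) (x : E) :
    fderiv ℝ (fun y => a • f (c • y)) x = (a * c) • fderiv ℝ f (c • x) := by
  rw [show (fun y => a • f (c • y)) = a • fun y => f (c • y) from rfl,
    fderiv_const_smul_field, Pi.smul_apply, fderiv_comp_smul, smul_smul]

theorem deriv_const_smul_comp_const_mul (a c : ℝ) (f : ℝ → F) (t : ℝ) :
    deriv (fun s => a • f (c * s)) t = (a * c) • deriv f (c * t) := by
  rw [deriv_fun_const_smul_field, deriv_comp_mul_left, smul_smul]

theorem ContDiff.comp_mul_smul {n : WithTop ℕ∞} {f : ℝ × E → F} (hf : ContDiff ℝ n f)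
    (a c : ℝ) : ContDiff ℝ n fun p : ℝ × E => f (a * p.1, c • p.2) :=
  hf.comp ((contDiff_const.mul contDiff_fst).prodMk (contDiff_snd.const_smul c))

end Rescaling

theorem lap3_rescale (c : ℝ) (f : E3 → E3) (x : E3) :
    lap3 (fun z => c • f (c • z)) x = c ^ 3 • lap3 f (c • x) := by
  simp only [lap3, fderiv_const_smul_comp_const_smul, smul_apply, Finset.smul_sum]
  refine Finset.sum_congr rfl fun i _ => ?_
  rw [fderiv_const_smul_comp_const_smul (c * c) c (fun w => fderiv ℝ f w (e3 i)) x,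
    smul_apply]
  ring_nf

theorem div3_rescale (c : ℝ) (f : E3 → E3) (x : E3) :
    div3 (fun z => c • f (c • z)) x = c ^ 2 * div3 f (c • x) := by
  simp [div3, fderiv_const_smul_comp_const_smul, Finset.mul_sum, sq]

theorem conv_rescale (c : ℝ) (v : E3) (f : E3 → E3) (x : E3) :
    conv (c • v) (fun z => c • f (c • z)) x = c ^ 3 • conv v f (c • x) := by
  simp only [conv, fderiv_const_smul_comp_const_smul, smul_apply, map_smul,
    smul_smul]
  ring_nf

theorem gradient_rescale (c : ℝ) (p : E3 → ℝ) (x : E3) :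
    gradient (fun z => c ^ 2 * p (c • z)) x = c ^ 3 • gradient p (c • x) := by
  have h := fderiv_const_smul_comp_const_smul (c ^ 2) c p x
  simp only [smul_eq_mul] at h
  rw [gradient, h, gradient, map_smul]
  ring_nf

theorem supSq_rescale (c : ℝ) (U : E3) (u : ℝ → E3 → E3) (t : ℝ) :
    supSq (c • U) (fun t x => c • u (c ^ 2 * t) (c • x)) t = c ^ 2 * supSq U u (c ^ 2 * t) := by
  rcases eq_or_ne c 0 with rfl | hc
  · simp [supSq]
  have hsurj : Function.Surjective (fun x : E3 => c • x) := fun y =>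
    ⟨c⁻¹ • y, smul_inv_smul₀ hc y⟩
  simp only [supSq, ← smul_sub, norm_smul, mul_pow, Real.norm_eq_abs, sq_abs]
  rw [Real.mul_iSup_of_nonneg (sq_nonneg c)]
  exact hsurj.iSup_comp fun y => c ^ 2 * ‖u (c ^ 2 * t) y - U‖ ^ 2

theorem tamingFn_mul_mul {a : ℝ} (ha : 0 ≤ a) (ν κ N r : ℝ) :
    tamingFn ν κ (a * N) (a * r) = a * tamingFn ν κ N r := by
  rw [tamingFn, tamingFn, ← mul_sub, ← mul_zero a, ← mul_max_of_nonneg _ _ ha, mul_zero]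
  ring

theorem stmt8_general (ν κ N : ℝ) (U : E3)
    (lam : ℝ)
    (u : ℝ → E3 → E3) (P : ℝ → E3 → ℝ)
    (h : IsTamedNSSolution ν κ N U u P) :
    IsTamedNSSolution ν κ (lam ^ 2 * N) (lam • U)
      (fun t x => lam • u (lam ^ 2 * t) (lam • x))
      (fun t x => lam ^ 2 * P (lam ^ 2 * t) (lam • x)) := by
  obtain ⟨hu, hP, hbdd, heq, hdiv⟩ := h
  refine ⟨(hu.comp_mul_smul _ _).const_smul lam, contDiff_const.mul (hP.comp_mul_smul _ _),
    fun t => ?_, fun t x => ?_, fun t x => ?_⟩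
  · obtain ⟨M, hM⟩ := hbdd (lam ^ 2 * t)
    refine ⟨|lam| * M, fun x => ?_⟩
    rw [← smul_sub, norm_smul, Real.norm_eq_abs]
    exact mul_le_mul_of_nonneg_left (hM _) (abs_nonneg lam)
  · rw [deriv_const_smul_comp_const_mul lam (lam ^ 2) (fun s => u s (lam • x)), heq,
      lap3_rescale, conv_rescale, gradient_rescale, supSq_rescale,
      tamingFn_mul_mul (sq_nonneg lam)]
    module
  · rw [div3_rescale, hdiv, mul_zero]

/-- (Scale invariance of the tamed Navier–Stokes equation.)
If `(u, P)` is a classical solution with parameters `(ν, κ, N, U)` and `λ > 0`, then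
`ũ(t,x) := λ·u(λ²t, λx)`, `P̃(t,x) := λ²·P(λ²t, λx)` is a classical solution with
parameters `(ν, κ, λ²N, λU)`. -/
theorem stmt8 (ν κ N : ℝ) (hν : 0 < ν) (hκ : 0 < κ) (hN : 0 ≤ N) (U : E3)
    (lam : ℝ) (hlam : 0 < lam)
    (u : ℝ → E3 → E3) (P : ℝ → E3 → ℝ)
    (h : IsTamedNSSolution ν κ N U u P) :
    IsTamedNSSolution ν κ (lam ^ 2 * N) (lam • U)
      (fun t x => lam • u (lam ^ 2 * t) (lam • x))
      (fun t x => lam ^ 2 * P (lam ^ 2 * t) (lam • x)) :=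
  stmt8_general ν κ N U lam u P h

end
end

section
/- (Vorticity equation for the tamed Navier–Stokes equation) Let ν, κ > 0, N ≥ 0, and U ∈ ℝ³ a constant vector. Let (u, P) be a classical solution of the tamed Navier–Stokes equation with parameters (ν, κ, N, U), with u of class C³ and P of class C². Define the vorticity ω : ℝ × ℝ³ → ℝ³ by ω = curl u, i.e. ω₁ = ∂₂u₃ − ∂₃u₂, ω₂ = ∂₃u₁ − ∂₁u₃, ω₃ = ∂₁u₂ − ∂₂u₁. Then for all (t,x) ∈ ℝ × ℝ³: ∂ₜω(t,x) = ν·Δω(t,x) + (ω(t,x)·∇)u(t,x) − (u(t,x)·∇)ω(t,x) − g^{ν,κ}_N(S(t))·ω(t,x), where S(t) = sup_{x ∈ ℝ³} |u(t,x) − U|². -/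
noncomputable section

open Set

/-- The curl `∇ ∧ f` of a vector field `f : ℝ³ → ℝ³` at `x` (0-indexed components):
`(curl f)₀ = ∂₁f₂ − ∂₂f₁`, `(curl f)₁ = ∂₂f₀ − ∂₀f₂`, `(curl f)₂ = ∂₀f₁ − ∂₁f₀`. -/
def curl3 (f : E3 → E3) (x : E3) : E3 :=
  (WithLp.equiv 2 (Fin 3 → ℝ)).symm
    ![fderiv ℝ f x (e3 1) 2 - fderiv ℝ f x (e3 2) 1,
      fderiv ℝ f x (e3 2) 0 - fderiv ℝ f x (e3 0) 2,
      fderiv ℝ f x (e3 0) 1 - fderiv ℝ f x (e3 1) 0]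

/-!
Take the curl of the equation. The curl is linear in the derivative, which disposes of the
constant `U`; by symmetry of second derivatives it kills `∇P` and commutes with `∂ₜ` and `Δ`. The
convective term is `(u·∇)u = Du(u)`, with derivative `Du ∘ Du + D²u(u)`: the curl of the second
summand is `(u·∇)ω`, and for every `3 × 3` matrix `A` the curl of `A²` is `tr A · curl A − A curl A`,
which for divergence-free `u` is `−(ω·∇)u`.
-/

open ContinuousLinearMap

section

variable {E E' F G : Type*} [NormedAddCommGroup E] [NormedSpace ℝ E]
  [NormedAddCommGroup E'] [NormedSpace ℝ E'] [NormedAddCommGroup F] [NormedSpace ℝ F]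
  [NormedAddCommGroup G] [NormedSpace ℝ G]

theorem ContDiffAt.fderiv_fderiv_apply {f : E → F} {x : E} (hf : ContDiffAt ℝ 2 f x) (v : E) :
    fderiv ℝ (fun y => fderiv ℝ f y v) x = fderiv ℝ (fderiv ℝ f) x v := by
  have hd : DifferentiableAt ℝ (fderiv ℝ f) x :=
    (hf.fderiv_right (m := 1) le_rfl).differentiableAt one_ne_zero
  ext w
  rw [fderiv_clm_apply hd (differentiableAt_const v)]
  simpa using (hf.isSymmSndFDerivAt (by simp)) w v

theorem ContDiffAt.fderiv_clm_fderiv_apply {f : E → F} {x : E} (hf : ContDiffAt ℝ 2 f x)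
    (Φ : (E →L[ℝ] F) →L[ℝ] G) (v : E) :
    fderiv ℝ (fun y => Φ (fderiv ℝ f y)) x v = Φ (fderiv ℝ (fun y => fderiv ℝ f y v) x) := by
  have hd : DifferentiableAt ℝ (fderiv ℝ f) x :=
    (hf.fderiv_right (m := 1) le_rfl).differentiableAt one_ne_zero
  have hΦ : HasFDerivAt (fun y => Φ (fderiv ℝ f y)) (Φ.comp (fderiv ℝ (fderiv ℝ f) x)) x :=
    Φ.hasFDerivAt.comp x hd.hasFDerivAt
  rw [hf.fderiv_fderiv_apply, hΦ.fderiv]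
  rfl

theorem fderiv_comp_prodMk_right {f : E × E' → F} {a : E} {b : E'}
    (hf : DifferentiableAt ℝ f (a, b)) :
    fderiv ℝ (fun y => f (a, y)) b = (fderiv ℝ f (a, b)).comp (inr ℝ E E') :=
  (hf.hasFDerivAt.comp b (hasFDerivAt_prodMk_right a b)).fderiv

theorem deriv_comp_prodMk_left {f : ℝ × E → F} {t : ℝ} {y : E}
    (hf : DifferentiableAt ℝ f (t, y)) :
    deriv (fun s => f (s, y)) t = fderiv ℝ f (t, y) (1, 0) :=
  (hf.hasFDerivAt.comp_hasDerivAt t ((hasDerivAt_id t).prodMk (hasDerivAt_const t y))).deriv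

theorem deriv_clm_fderiv {u : ℝ → E → F} (hu : ContDiff ℝ 2 (fun p : ℝ × E => u p.1 p.2))
    (Φ : (E →L[ℝ] F) →L[ℝ] G) (t : ℝ) (x : E) :
    deriv (fun s => Φ (fderiv ℝ (u s) x)) t =
      Φ (fderiv ℝ (fun y => deriv (fun s => u s y) t) x) := by
  set U : ℝ × E → F := fun p => u p.1 p.2
  have hU : Differentiable ℝ U := hu.differentiable two_ne_zero
  have hU' : Differentiable ℝ (fun p => fderiv ℝ U p (1, 0)) :=
    ((hu.fderiv_right (m := 1) le_rfl).clm_apply contDiff_const).differentiable one_ne_zero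
  -- `Ψ L = Φ (L ∘ inr)`: the time derivative becomes a directional derivative on `ℝ × E`.
  let Ψ : ((ℝ × E) →L[ℝ] F) →L[ℝ] G := Φ.comp ((compL ℝ E (ℝ × E) F).flip (inr ℝ ℝ E))
  have hΨU : Differentiable ℝ (fun p => Ψ (fderiv ℝ U p)) :=
    Ψ.differentiable.comp ((hu.fderiv_right (m := 1) le_rfl).differentiable one_ne_zero)
  have hlhs : (fun s => Φ (fderiv ℝ (u s) x)) = fun s => Ψ (fderiv ℝ U (s, x)) :=
    funext fun s => congrArg Φ (fderiv_comp_prodMk_right (f := U) (hU (s, x)))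
  have hrhs : (fun y => deriv (fun s => u s y) t) = fun y => fderiv ℝ U (t, y) (1, 0) :=
    funext fun y => deriv_comp_prodMk_left (f := U) (hU (t, y))
  rw [hlhs, hrhs, deriv_comp_prodMk_left (hΨU (t, x)), hu.contDiffAt.fderiv_clm_fderiv_apply,
    fderiv_comp_prodMk_right (hU' (t, x))]
  rfl

end

def curlCLM : (E3 →L[ℝ] E3) →L[ℝ] E3 :=
  LinearMap.toContinuousLinearMap
    { toFun := fun A => (WithLp.equiv 2 (Fin 3 → ℝ)).symm
        ![A (e3 1) 2 - A (e3 2) 1, A (e3 2) 0 - A (e3 0) 2, A (e3 0) 1 - A (e3 1) 0]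
      map_add' := fun A B => by ext i; fin_cases i <;> simp <;> ring
      map_smul' := fun c A => by ext i; fin_cases i <;> simp <;> ring }

theorem curl3_eq_curlCLM (f : E3 → E3) (x : E3) : curl3 f x = curlCLM (fderiv ℝ f x) := rfl

theorem curlCLM_apply (A : E3 →L[ℝ] E3) (i : Fin 3) :
    curlCLM A i = ![A (e3 1) 2 - A (e3 2) 1, A (e3 2) 0 - A (e3 0) 2, A (e3 0) 1 - A (e3 1) 0] i :=
  rfl

theorem clm_apply_eq_sum_e3 (A : E3 →L[ℝ] E3) (w : E3) : A w = ∑ k, w k • A (e3 k) := by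
  conv_lhs => rw [← (EuclideanSpace.basisFun (Fin 3) ℝ).sum_repr w]
  simp [e3]

theorem curlCLM_comp_self (A : E3 →L[ℝ] E3) :
    curlCLM (A.comp A) = (∑ i, A (e3 i) i) • curlCLM A - A (curlCLM A) := by
  ext j
  fin_cases j <;>
  simp [curlCLM_apply, clm_apply_eq_sum_e3 A (A _), clm_apply_eq_sum_e3 A (curlCLM A),
    Fin.sum_univ_three] <;>
  ring

section curl

variable {f g : E3 → E3} {x : E3}

theorem curl3_fun_add (hf : DifferentiableAt ℝ f x) (hg : DifferentiableAt ℝ g x) :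
    curl3 (fun y => f y + g y) x = curl3 f x + curl3 g x := by
  simp only [curl3_eq_curlCLM, fderiv_fun_add hf hg, map_add]

theorem curl3_fun_sub (hf : DifferentiableAt ℝ f x) (hg : DifferentiableAt ℝ g x) :
    curl3 (fun y => f y - g y) x = curl3 f x - curl3 g x := by
  simp only [curl3_eq_curlCLM, fderiv_fun_sub hf hg, map_sub]

theorem curl3_const_smul (hf : DifferentiableAt ℝ f x) (c : ℝ) :
    curl3 (fun y => c • f y) x = c • curl3 f x := by
  simp only [curl3_eq_curlCLM, fderiv_fun_const_smul hf, map_smul]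

theorem curl3_sub_const (c : E3) : curl3 (fun y => f y - c) x = curl3 f x := by
  simp only [curl3_eq_curlCLM, fderiv_sub_const]

theorem curl3_sum {ι : Type*} (s : Finset ι) {f : ι → E3 → E3}
    (hf : ∀ i ∈ s, DifferentiableAt ℝ (f i) x) :
    curl3 (fun y => ∑ i ∈ s, f i y) x = ∑ i ∈ s, curl3 (f i) x := by
  simp only [curl3_eq_curlCLM, fderiv_fun_sum hf, map_sum]

theorem fderiv_curl3_apply (hf : ContDiffAt ℝ 2 f x) (v : E3) :
    fderiv ℝ (curl3 f) x v = curl3 (fun y => fderiv ℝ f y v) x :=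
  hf.fderiv_clm_fderiv_apply curlCLM v

theorem curl3_lap3 (hf : ContDiff ℝ 3 f) : curl3 (lap3 f) x = lap3 (curl3 f) x := by
  have hdf : ∀ i, ContDiff ℝ 2 (fun y => fderiv ℝ f y (e3 i)) := fun i =>
    (hf.fderiv_right (m := 2) le_rfl).clm_apply contDiff_const
  have hcurl : ∀ i,
      (fun y => fderiv ℝ (curl3 f) y (e3 i)) = curl3 (fun y => fderiv ℝ f y (e3 i)) :=
    fun i => funext fun y => fderiv_curl3_apply (hf.of_le (by norm_num)).contDiffAt (e3 i)
  unfold lap3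
  rw [curl3_sum _ fun i _ => ?_]
  · simp only [hcurl, fderiv_curl3_apply (hdf _).contDiffAt]
  · exact (((hdf i).fderiv_right (m := 1) (by norm_num)).clm_apply
      contDiff_const).differentiable one_ne_zero x

end curl

theorem toDual_symm_apply_e3 (L : E3 →L[ℝ] ℝ) (j : Fin 3) :
    (InnerProductSpace.toDual ℝ E3).symm L j = L (e3 j) := by
  rw [← InnerProductSpace.toDual_symm_apply, e3, EuclideanSpace.inner_single_right]
  simp

theorem hasFDerivAt_gradient {F : Type*} [NormedAddCommGroup F] [InnerProductSpace ℝ F]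
    [FiniteDimensional ℝ F] {p : F → ℝ} {x : F} (hp : DifferentiableAt ℝ (fderiv ℝ p) x) :
    HasFDerivAt (gradient p)
      ((InnerProductSpace.toDual ℝ F).symm.toContinuousLinearMap.comp
        (fderiv ℝ (fderiv ℝ p) x)) x :=
  (InnerProductSpace.toDual ℝ F).symm.toContinuousLinearMap.hasFDerivAt.comp x hp.hasFDerivAt

theorem curl3_gradient {p : E3 → ℝ} {x : E3} (hp : ContDiffAt ℝ 2 p x) :
    curl3 (gradient p) x = 0 := by
  have hd : DifferentiableAt ℝ (fderiv ℝ p) x :=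
    (hp.fderiv_right (m := 1) le_rfl).differentiableAt one_ne_zero
  have hsymm : ∀ v w, fderiv ℝ (fderiv ℝ p) x v w - fderiv ℝ (fderiv ℝ p) x w v = 0 :=
    fun v w => sub_eq_zero.2 (hp.isSymmSndFDerivAt (by simp) v w)
  rw [curl3_eq_curlCLM, (hasFDerivAt_gradient hd).fderiv]
  ext j
  fin_cases j <;> simp [curlCLM_apply, toDual_symm_apply_e3, hsymm]

theorem curl3_conv_self {v : E3 → E3} {x : E3} (hv : ContDiffAt ℝ 2 v x) :
    curl3 (fun y => conv (v y) v y) x =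
      div3 v x • curl3 v x - conv (curl3 v x) v x + conv (v x) (curl3 v) x := by
  have hv1 : DifferentiableAt ℝ v x := hv.differentiableAt two_ne_zero
  have hd : DifferentiableAt ℝ (fderiv ℝ v) x :=
    (hv.fderiv_right (m := 1) le_rfl).differentiableAt one_ne_zero
  have hflip : (fderiv ℝ (fderiv ℝ v) x).flip (v x) =
      fderiv ℝ (fun y => fderiv ℝ v y (v x)) x := by
    rw [fderiv_clm_apply hd (differentiableAt_const _)]
    simp
  simp only [conv]
  rw [curl3_eq_curlCLM, fderiv_clm_apply hd hv1, map_add, curlCLM_comp_self, hflip,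
    fderiv_curl3_apply hv]
  rfl

theorem deriv_curl3 {u : ℝ → E3 → E3} (hu : ContDiff ℝ 2 (fun p : ℝ × E3 => u p.1 p.2))
    (t : ℝ) (x : E3) :
    deriv (fun s => curl3 (u s) x) t = curl3 (fun y => deriv (fun s => u s y) t) x :=
  deriv_clm_fderiv hu curlCLM t x

theorem curl3_tamedNS_rhs (ν c : ℝ) (U : E3) {v : E3 → E3} {p : E3 → ℝ}
    (hv : ContDiff ℝ 3 v) (hp : ContDiff ℝ 2 p) {x : E3} (hdiv : div3 v x = 0) :
    curl3 (fun y => ν • lap3 v y - conv (v y) v y + gradient p y - c • (v y - U)) x =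
      ν • lap3 (curl3 v) x + conv (curl3 v x) v x - conv (v x) (curl3 v) x
        - c • curl3 v x := by
  have hv1 : DifferentiableAt ℝ v x := hv.differentiable (by norm_num) x
  have hlap : DifferentiableAt ℝ (lap3 v) x := by
    refine ContDiff.differentiable (n := 1) ?_ one_ne_zero x
    refine ContDiff.sum fun i _ => ContDiff.clm_apply ?_ contDiff_const
    exact (((hv.fderiv_right (m := 2) le_rfl).clm_apply contDiff_const).fderiv_right le_rfl)
  have hconv : DifferentiableAt ℝ (fun y => conv (v y) v y) x :=
    (((hv.fderiv_right (m := 2) le_rfl).clm_apply (hv.of_le (by norm_num))).differentiable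
      (by norm_num)) x
  have hgrad : DifferentiableAt ℝ (gradient p) x :=
    (hasFDerivAt_gradient ((hp.fderiv_right (m := 1) le_rfl).differentiable one_ne_zero x))
      |>.differentiableAt
  have hνlap := hlap.fun_const_smul ν
  rw [curl3_fun_sub ((hνlap.fun_sub hconv).fun_add hgrad) ((hv1.sub_const U).fun_const_smul c),
    curl3_fun_add (hνlap.fun_sub hconv) hgrad, curl3_fun_sub hνlap hconv,
    curl3_const_smul hlap, curl3_const_smul (hv1.sub_const U), curl3_sub_const, curl3_lap3 hv,
    curl3_conv_self (hv.of_le (by norm_num)).contDiffAt, curl3_gradient hp.contDiffAt, hdiv]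
  module

theorem stmt9_general (ν κ N : ℝ) (U : E3)
    (u : ℝ → E3 → E3) (P : ℝ → E3 → ℝ)
    (h : IsTamedNSSolution ν κ N U u P)
    (hu3 : ContDiff ℝ 3 (fun p : ℝ × E3 => u p.1 p.2))
    (hP2 : ContDiff ℝ 2 (fun p : ℝ × E3 => P p.1 p.2))
    (ω : ℝ → E3 → E3) (hω : ∀ t x, ω t x = curl3 (u t) x) :
    ∀ (t : ℝ) (x : E3),
      deriv (fun s => ω s x) t =
        ν • lap3 (ω t) x + conv (ω t x) (u t) x - conv (u t x) (ω t) x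
          - tamingFn ν κ N (supSq U u t) • ω t x := by
  intro t x
  obtain ⟨-, -, -, hpde, hdiv⟩ := h
  have hv : ContDiff ℝ 3 (u t) := hu3.comp (contDiff_const.prodMk contDiff_id)
  have hp : ContDiff ℝ 2 (P t) := hP2.comp (contDiff_const.prodMk contDiff_id)
  calc deriv (fun s => ω s x) t
      = curl3 (fun y => deriv (fun s => u s y) t) x := by
        simp only [hω]
        exact deriv_curl3 (hu3.of_le (by norm_num)) t x
    _ = _ := by
        simp only [hpde]
        rw [curl3_tamedNS_rhs ν _ U hv hp (hdiv t x), show ω t = curl3 (u t) from funext (hω t)]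

/-- (Vorticity equation for the tamed Navier–Stokes equation.)
If `(u, P)` is a classical solution with parameters `(ν, κ, N, U)`, with `u` of class `C³`
and `P` of class `C²`, then the vorticity `ω = curl u` satisfies
`∂ₜω = ν Δω + (ω·∇)u − (u·∇)ω − g^{ν,κ}_N(S(t))·ω`. -/
theorem stmt9 (ν κ N : ℝ) (hν : 0 < ν) (hκ : 0 < κ) (hN : 0 ≤ N) (U : E3)
    (u : ℝ → E3 → E3) (P : ℝ → E3 → ℝ)
    (h : IsTamedNSSolution ν κ N U u P)
    (hu3 : ContDiff ℝ 3 (fun p : ℝ × E3 => u p.1 p.2))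
    (hP2 : ContDiff ℝ 2 (fun p : ℝ × E3 => P p.1 p.2))
    (ω : ℝ → E3 → E3) (hω : ∀ t x, ω t x = curl3 (u t) x) :
    ∀ (t : ℝ) (x : E3),
      deriv (fun s => ω s x) t =
        ν • lap3 (ω t) x + conv (ω t x) (u t) x - conv (u t x) (ω t) x
          - tamingFn ν κ N (supSq U u t) • ω t x :=
  stmt9_general ν κ N U u P h hu3 hP2 ω hω

end
end

section
/- Let v, u : ℝ³ → ℝ³ be continuously differentiable, with u compactly supported, and suppose div v(x) = 0 for all x ∈ ℝ³. Then ∫_{ℝ³} ⟨(v(x)·∇)u(x), u(x)⟩ dx = 0. -/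
/-! Since `⟪Du(v), u⟫ = ½ D(‖u‖²)(v)`, integrating by parts in each coordinate direction moves
the derivative onto `v`: `∫ D(‖u‖²)(v) = -∫ ‖u‖² div v`, which vanishes as `div v = 0`. -/

open MeasureTheory

theorem integral_mul_fderiv_eq_neg_integral_fderiv_mul {E : Type*} [NormedAddCommGroup E]
    [NormedSpace ℝ E] [FiniteDimensional ℝ E] [MeasurableSpace E] [BorelSpace E]
    (μ : Measure E) [μ.IsAddHaarMeasure] {f g : E → ℝ}
    (hg : ContDiff ℝ 1 g) (hgc : HasCompactSupport g) (hf : ContDiff ℝ 1 f) (w : E) :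
    ∫ x, g x * fderiv ℝ f x w ∂μ = -∫ x, fderiv ℝ g x w * f x ∂μ := by
  have hg' : Continuous (fun x => fderiv ℝ g x w) :=
    hg.continuous_fderiv_apply one_ne_zero |>.comp (continuous_id.prodMk continuous_const)
  have hf' : Continuous (fun x => fderiv ℝ f x w) :=
    hf.continuous_fderiv_apply one_ne_zero |>.comp (continuous_id.prodMk continuous_const)
  exact integral_mul_fderiv_eq_neg_fderiv_mul_of_integrable
    ((hg'.mul hf.continuous).integrable_of_hasCompactSupport (hgc.fderiv_apply ℝ w).mul_right)
    ((hg.continuous.mul hf').integrable_of_hasCompactSupport hgc.mul_right)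
    ((hg.continuous.mul hf.continuous).integrable_of_hasCompactSupport hgc.mul_right)
    (fun x _ => hg.differentiable one_ne_zero x) (fun x _ => hf.differentiable one_ne_zero x)

section Divergence

variable {ι : Type*} [Fintype ι] [DecidableEq ι]

noncomputable def divergence (v : EuclideanSpace ℝ ι → EuclideanSpace ℝ ι)
    (x : EuclideanSpace ℝ ι) : ℝ :=
  ∑ i, fderiv ℝ v x (EuclideanSpace.single i 1) i

omit [DecidableEq ι] in
theorem fderiv_euclideanSpace_apply {E : Type*} [NormedAddCommGroup E] [NormedSpace ℝ E]
    {v : E → EuclideanSpace ℝ ι} {x : E} (hv : DifferentiableAt ℝ v x) (i : ι) (w : E) :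
    fderiv ℝ (fun y => v y i) x w = fderiv ℝ v x w i := by
  change fderiv ℝ (EuclideanSpace.proj i ∘ v) x w = _
  rw [((EuclideanSpace.proj (𝕜 := ℝ) i).hasFDerivAt.comp x hv.hasFDerivAt).fderiv]
  rfl

theorem ContinuousLinearMap.apply_eq_sum_euclideanSpace {F : Type*} [AddCommGroup F]
    [Module ℝ F] [TopologicalSpace F] (L : EuclideanSpace ℝ ι →L[ℝ] F)
    (w : EuclideanSpace ℝ ι) :
    L w = ∑ i, w i • L (EuclideanSpace.single i 1) := by
  conv_lhs => rw [← (EuclideanSpace.basisFun ι ℝ).sum_repr w]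
  simp

theorem integral_fderiv_apply_eq_neg_integral_mul_divergence
    (μ : Measure (EuclideanSpace ℝ ι)) [μ.IsAddHaarMeasure]
    {g : EuclideanSpace ℝ ι → ℝ} {v : EuclideanSpace ℝ ι → EuclideanSpace ℝ ι}
    (hg : ContDiff ℝ 1 g) (hgc : HasCompactSupport g) (hv : ContDiff ℝ 1 v) :
    ∫ x, fderiv ℝ g x (v x) ∂μ = -∫ x, g x * divergence v x ∂μ := by
  have hvi (i : ι) : ContDiff ℝ 1 (fun x => v x i) :=
    (EuclideanSpace.proj (𝕜 := ℝ) i).contDiff.comp hv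
  have hint (i : ι) :
      Integrable (fun x => fderiv ℝ g x (EuclideanSpace.single i 1) * v x i) μ :=
    ((hg.continuous_fderiv one_ne_zero).clm_apply continuous_const).mul (hvi i).continuous
      |>.integrable_of_hasCompactSupport (hgc.fderiv_apply ℝ _).mul_right
  have hint' (i : ι) :
      Integrable (fun x => g x * fderiv ℝ (fun y => v y i) x (EuclideanSpace.single i 1)) μ :=
    hg.continuous.mul (((hvi i).continuous_fderiv one_ne_zero).clm_apply continuous_const)
      |>.integrable_of_hasCompactSupport hgc.mul_right
  calc ∫ x, fderiv ℝ g x (v x) ∂μ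
      = ∑ i, ∫ x, fderiv ℝ g x (EuclideanSpace.single i 1) * v x i ∂μ := by
        rw [← integral_finsetSum _ fun i _ => hint i]
        congr 1 with x
        rw [(fderiv ℝ g x).apply_eq_sum_euclideanSpace]
        simp only [smul_eq_mul, mul_comm]
    _ = ∑ i, -∫ x, g x * fderiv ℝ (fun y => v y i) x (EuclideanSpace.single i 1) ∂μ := by
        refine Finset.sum_congr rfl fun i _ => ?_
        rw [integral_mul_fderiv_eq_neg_integral_fderiv_mul μ hg hgc (hvi i), neg_neg]
    _ = -∫ x, g x * divergence v x ∂μ := by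
        rw [Finset.sum_neg_distrib, ← integral_finsetSum _ fun i _ => hint' i]
        simp only [divergence, Finset.mul_sum,
          fderiv_euclideanSpace_apply (hv.differentiable one_ne_zero _)]

end Divergence

theorem fderiv_norm_sq_comp_apply {E F : Type*} [NormedAddCommGroup E] [NormedSpace ℝ E]
    [NormedAddCommGroup F] [InnerProductSpace ℝ F] {u : E → F} {x : E}
    (hu : DifferentiableAt ℝ u x) (w : E) :
    fderiv ℝ (fun y => ‖u y‖ ^ 2) x w = 2 * inner ℝ (fderiv ℝ u x w) (u x) := by
  rw [hu.hasFDerivAt.norm_sq.fderiv]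
  simp [real_inner_comm]

/-- Let `v, u : ℝ³ → ℝ³` be `C¹`, with `u` compactly supported, and
`div v = 0`. Then `∫_{ℝ³} ⟨(v·∇)u, u⟩ dx = 0`, where `(v·∇)u` at `x` is the Fréchet
derivative of `u` at `x` applied to `v(x)` and `div v = ∑ᵢ ∂ᵢvᵢ`. -/
theorem stmt12 (v u : EuclideanSpace ℝ (Fin 3) → EuclideanSpace ℝ (Fin 3))
    (hv : ContDiff ℝ 1 v) (hu : ContDiff ℝ 1 u) (hcs : HasCompactSupport u)
    (hdiv : ∀ x, ∑ i : Fin 3, fderiv ℝ v x (EuclideanSpace.single i 1) i = 0) :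
    ∫ x, (inner ℝ (fderiv ℝ u x (v x)) (u x) : ℝ) ∂volume = 0 := by
  have hu2 : ContDiff ℝ 1 (fun x => ‖u x‖ ^ 2) := hu.norm_sq ℝ
  have hu2c : HasCompactSupport (fun x => ‖u x‖ ^ 2) :=
    hcs.comp_left (g := fun y : EuclideanSpace ℝ (Fin 3) => ‖y‖ ^ 2) (by simp)
  calc ∫ x, (inner ℝ (fderiv ℝ u x (v x)) (u x) : ℝ)
      = ∫ x, 2⁻¹ * fderiv ℝ (fun y => ‖u y‖ ^ 2) x (v x) := by
        congr 1 with x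
        rw [fderiv_norm_sq_comp_apply (hu.differentiable one_ne_zero x)]
        ring
    _ = -(2⁻¹ * ∫ x, ‖u x‖ ^ 2 * divergence v x) := by
        rw [integral_const_mul, integral_fderiv_apply_eq_neg_integral_mul_divergence _ hu2 hu2c hv,
          mul_neg]
    _ = 0 := by simp [divergence, hdiv]
end
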